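/- Let μ ∈ ℝ, λ ∈ ℝ, let ℓ > 0, and let G be a probability measure on (0,∞) with support contained in [ℓ, ∞) and satisfying ∫ log σ dG(σ) < ∞. Then ∫_{−∞}^{∞} f_SNSM(z; μ, λ, G) · max(log|z|, 0) dz < ∞, i.e., the positive part of log|Z| has finite expectation when Z has density f_SNSM(·; μ, λ, G). -/

import Mathlib

open MeasureTheory

/-- Standard normal density. -/
noncomputable def stdPhi (z : ℝ) : ℝ := Real.exp (-(z ^ 2) / 2) / Real.sqrt (2 * Real.pi)

/-- Standard normal cumulative distribution function. -/
noncomputable def stdPhiCDF (z : ℝ) : ℝ := ∫ t in Set.Iic z, stdPhi t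

/-- Skew-normal density with location `μ`, shape `lam`, scale `σ`. -/
noncomputable def snPDF (μ lam σ z : ℝ) : ℝ :=
  (2 / σ) * stdPhi ((z - μ) / σ) * stdPhiCDF (lam * ((z - μ) / σ))

/-- Skew-normal scale mixture density with mixing distribution `G`. -/
noncomputable def snsmPDF (μ lam : ℝ) (G : Measure ℝ) (z : ℝ) : ℝ :=
  ∫ σ, snPDF μ lam σ z ∂G


/-! Write `z = μ + σ t`. Subadditivity of `log⁺` gives
`log⁺ z ≤ log 2 + log⁺ μ + log⁺ σ + t²`, and the skew-normal density is at most twice the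
`N(μ, σ²)` density. Integrating in `z` therefore bounds the contribution of each scale `σ` by
`2 (log 2 + log⁺ μ + 𝔼 t²) + 2 log⁺ σ`, with `t` standard normal; by Tonelli and the log-moment
hypothesis on `G` this integrates to a finite quantity. -/

open Real ProbabilityTheory
open scoped ENNReal

lemma ofReal_integral_le_lintegral_ofReal {α : Type*} [MeasurableSpace α] {μ : Measure α}
    (f : α → ℝ) : ENNReal.ofReal (∫ x, f x ∂μ) ≤ ∫⁻ x, ENNReal.ofReal (f x) ∂μ := by
  by_cases hf : Integrable f μ
  · rw [integral_eq_lintegral_pos_part_sub_lintegral_neg_part hf]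
    exact (ENNReal.ofReal_le_ofReal (sub_le_self _ ENNReal.toReal_nonneg)).trans
      ENNReal.ofReal_toReal_le
  · simp [integral_undef hf]

lemma lintegral_comp_sub_div {g : ℝ → ℝ≥0∞} (hg : Measurable g) (μ : ℝ) {σ : ℝ} (hσ : 0 < σ) :
    ∫⁻ z, g ((z - μ) / σ) = ENNReal.ofReal σ * ∫⁻ t, g t := by
  have hshift : ∫⁻ z, g ((z - μ) / σ) = ∫⁻ z, g (σ⁻¹ * z) := by
    simp_rw [div_eq_inv_mul]
    exact lintegral_sub_right_eq_self (fun z => g (σ⁻¹ * z)) μ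
  rw [hshift, ← lintegral_map hg (measurable_const_mul _),
    Real.map_volume_mul_left (inv_ne_zero hσ.ne'), lintegral_smul_measure, inv_inv,
    abs_of_pos hσ, smul_eq_mul]

lemma posLog_le_sq (t : ℝ) : log⁺ t ≤ t ^ 2 := by
  rcases le_or_gt |t| 1 with ht | ht
  · rw [(posLog_eq_zero_iff t).mpr ht]
    positivity
  · rw [posLog_eq_log ht.le, ← log_abs, ← sq_abs]
    nlinarith [log_le_sub_one_of_pos (by linarith : 0 < |t|)]

lemma posLog_add_mul_le (μ σ t : ℝ) : log⁺ (μ + σ * t) ≤ log 2 + log⁺ μ + log⁺ σ + t ^ 2 := by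
  have := posLog_add (x := μ) (y := σ * t)
  have := posLog_mul (x := σ) (y := t)
  have := posLog_le_sq t
  linarith

lemma stdPhi_eq_gaussianPDFReal : stdPhi = gaussianPDFReal 0 1 := by
  ext z
  simp [stdPhi, gaussianPDFReal, div_eq_inv_mul, mul_comm]

lemma stdPhi_nonneg (z : ℝ) : 0 ≤ stdPhi z := by
  rw [stdPhi_eq_gaussianPDFReal]
  exact gaussianPDFReal_nonneg 0 1 z

lemma continuous_stdPhi : Continuous stdPhi := by
  unfold stdPhi
  fun_prop

lemma integrable_stdPhi : Integrable stdPhi := by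
  rw [stdPhi_eq_gaussianPDFReal]
  exact integrable_gaussianPDFReal 0 1

lemma integral_stdPhi : ∫ z, stdPhi z = 1 := by
  rw [stdPhi_eq_gaussianPDFReal]
  exact integral_gaussianPDFReal_eq_one 0 one_ne_zero

lemma lintegral_stdPhi : ∫⁻ z, ENNReal.ofReal (stdPhi z) = 1 := by
  rw [stdPhi_eq_gaussianPDFReal]
  exact lintegral_gaussianPDFReal_eq_one 0 one_ne_zero

lemma integrable_stdPhi_mul_sq : Integrable fun t => stdPhi t * t ^ 2 := by
  refine ((integrable_rpow_mul_exp_neg_mul_sq (by norm_num : (0 : ℝ) < 1 / 2)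
    (by norm_num : (-1 : ℝ) < 2)).mul_const (√(2 * π))⁻¹).congr (.of_forall fun t => ?_)
  simp only [stdPhi, show (2 : ℝ) = ((2 : ℕ) : ℝ) by norm_num, rpow_natCast]
  ring_nf

lemma lintegral_stdPhi_mul_add_sq {a : ℝ} (ha : 0 ≤ a) :
    ∫⁻ t, ENNReal.ofReal (stdPhi t * (a + t ^ 2))
      = ENNReal.ofReal a + ∫⁻ t, ENNReal.ofReal (stdPhi t * t ^ 2) := by
  have hsplit : ∀ t, ENNReal.ofReal (stdPhi t * (a + t ^ 2))
      = ENNReal.ofReal a * ENNReal.ofReal (stdPhi t) + ENNReal.ofReal (stdPhi t * t ^ 2) := by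
    intro t
    have := stdPhi_nonneg t
    rw [mul_add, ENNReal.ofReal_add (by positivity) (by positivity), mul_comm (stdPhi t) a,
      ENNReal.ofReal_mul ha]
  simp_rw [hsplit]
  rw [lintegral_add_left (continuous_stdPhi.measurable.ennreal_ofReal.const_mul _),
    lintegral_const_mul _ continuous_stdPhi.measurable.ennreal_ofReal, lintegral_stdPhi, mul_one]

lemma stdPhiCDF_le_one (z : ℝ) : stdPhiCDF z ≤ 1 :=
  integral_stdPhi ▸ setIntegral_le_integral integrable_stdPhi (.of_forall stdPhi_nonneg)

lemma monotone_stdPhiCDF : Monotone stdPhiCDF := fun _ _ hxy =>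
  setIntegral_mono_set integrable_stdPhi.integrableOn (.of_forall stdPhi_nonneg)
    (Set.Iic_subset_Iic.mpr hxy).eventuallyLE

lemma measurable_snPDF (μ lam : ℝ) : Measurable fun p : ℝ × ℝ => snPDF μ lam p.2 p.1 := by
  have := monotone_stdPhiCDF.measurable
  have := continuous_stdPhi.measurable
  unfold snPDF
  fun_prop

lemma snPDF_le {σ : ℝ} (hσ : 0 < σ) (μ lam z : ℝ) :
    snPDF μ lam σ z ≤ 2 / σ * stdPhi ((z - μ) / σ) :=
  mul_le_of_le_one_right (by have := stdPhi_nonneg ((z - μ) / σ); positivity)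
    (stdPhiCDF_le_one _)

lemma lintegral_snPDF_mul_posLog_le (μ lam : ℝ) {σ : ℝ} (hσ : 0 < σ) :
    ∫⁻ z, ENNReal.ofReal (snPDF μ lam σ z * log⁺ z)
      ≤ 2 * (ENNReal.ofReal (log 2 + log⁺ μ) + ∫⁻ t, ENNReal.ofReal (stdPhi t * t ^ 2))
        + 2 * ENNReal.ofReal (log σ) := by
  set a := log 2 + log⁺ μ + log⁺ σ
  set g : ℝ → ℝ≥0∞ := fun t => ENNReal.ofReal (stdPhi t * (a + t ^ 2))
  have hpoint : ∀ z, ENNReal.ofReal (snPDF μ lam σ z * log⁺ z)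
      ≤ ENNReal.ofReal (2 / σ) * g ((z - μ) / σ) := by
    intro z
    have hz : z = μ + σ * ((z - μ) / σ) := by field_simp; ring
    have hlog : log⁺ z ≤ a + ((z - μ) / σ) ^ 2 := by
      simpa only [← hz] using posLog_add_mul_le μ σ ((z - μ) / σ)
    rw [← ENNReal.ofReal_mul (by positivity), ← mul_assoc]
    exact ENNReal.ofReal_le_ofReal (mul_le_mul (snPDF_le hσ μ lam z) hlog posLog_nonneg
      (by have := stdPhi_nonneg ((z - μ) / σ); positivity))
  have hg : Measurable g := by
    have := continuous_stdPhi.measurable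
    fun_prop
  have hμ : 0 ≤ log 2 + log⁺ μ := add_nonneg (log_nonneg one_le_two) posLog_nonneg
  have ha : ENNReal.ofReal a = ENNReal.ofReal (log 2 + log⁺ μ) + ENNReal.ofReal (log σ) := by
    rw [ENNReal.ofReal_add hμ posLog_nonneg, posLog_apply (x := σ), ENNReal.ofReal_max,
      ENNReal.ofReal_zero, zero_max]
  calc ∫⁻ z, ENNReal.ofReal (snPDF μ lam σ z * log⁺ z)
      ≤ ∫⁻ z, ENNReal.ofReal (2 / σ) * g ((z - μ) / σ) := lintegral_mono hpoint
    _ = ENNReal.ofReal (2 / σ) * (ENNReal.ofReal σ * ∫⁻ t, g t) := by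
      rw [lintegral_const_mul' _ _ ENNReal.ofReal_ne_top, lintegral_comp_sub_div hg μ hσ]
    _ = 2 * (ENNReal.ofReal a + ∫⁻ t, ENNReal.ofReal (stdPhi t * t ^ 2)) := by
      rw [← mul_assoc, ← ENNReal.ofReal_mul (by positivity), div_mul_cancel₀ _ hσ.ne',
        ENNReal.ofReal_ofNat,
        lintegral_stdPhi_mul_add_sq (add_nonneg hμ posLog_nonneg)]
    _ = _ := by rw [ha]; ring

theorem stmt10 (μ lam ℓ : ℝ) (hℓ : 0 < ℓ) (G : Measure ℝ)
    (hG : IsProbabilityMeasure G) (hsupp : G (Set.Iio ℓ) = 0)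
    (hlog : ∫⁻ σ, ENNReal.ofReal (Real.log σ) ∂G < ⊤) :
    ∫⁻ z, ENNReal.ofReal (snsmPDF μ lam G z * max (Real.log |z|) 0) ∂(volume : Measure ℝ)
      < ⊤ := by
  have hpos : ∀ᵐ σ ∂G, 0 < σ :=
    measure_eq_zero_iff_ae_notMem.mp hsupp |>.mono fun σ hσ => hℓ.trans_le (not_lt.mp hσ)
  set A := 2 * (ENNReal.ofReal (log 2 + log⁺ μ) + ∫⁻ t, ENNReal.ofReal (stdPhi t * t ^ 2))
  have hmix : ∀ z, ENNReal.ofReal (snsmPDF μ lam G z * max (log |z|) 0)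
      ≤ ∫⁻ σ, ENNReal.ofReal (snPDF μ lam σ z * log⁺ z) ∂G := fun z => by
    rw [max_comm, log_abs, ← posLog_apply, snsmPDF, ← integral_mul_const]
    exact ofReal_integral_le_lintegral_ofReal _
  calc ∫⁻ z, ENNReal.ofReal (snsmPDF μ lam G z * max (log |z|) 0)
      ≤ ∫⁻ z, ∫⁻ σ, ENNReal.ofReal (snPDF μ lam σ z * log⁺ z) ∂G := lintegral_mono hmix
    _ = ∫⁻ σ, (∫⁻ z, ENNReal.ofReal (snPDF μ lam σ z * log⁺ z)) ∂G :=
      lintegral_lintegral_swap ((measurable_snPDF μ lam).mul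
        (continuous_posLog.measurable.comp measurable_fst)).ennreal_ofReal.aemeasurable
    _ ≤ ∫⁻ σ, A + 2 * ENNReal.ofReal (log σ) ∂G :=
      lintegral_mono_ae (hpos.mono fun σ hσ => lintegral_snPDF_mul_posLog_le μ lam hσ)
    _ = A + 2 * ∫⁻ σ, ENNReal.ofReal (log σ) ∂G := by
      rw [lintegral_add_left measurable_const, lintegral_const, measure_univ, mul_one,
        lintegral_const_mul' 2 _ ENNReal.ofNat_ne_top]
    _ < ⊤ := by
      have := integrable_stdPhi_mul_sq.lintegral_lt_top
      finiteness
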